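/- arXiv:2311.12696 — 5 statements merged into one kernel-verified Lean document; each statement's English description precedes it below -/
import Mathlib

section
/- For a SISO LTI system of order n given by a minimal state-space realization, the restricted behavior B|_T for T ≥ n is a linear subspace of ℝ^{2T} of dimension exactly T + n. -/
open Matrix

/-- Membership of an input/output pair `p ∈ ℝ^T × ℝ^T ≅ ℝ^{2T}` in the restricted
behavior `B|_T` of the LTI system `(A,B,C,D)`: some state trajectory generates it. -/
def InBehavior {n : ℕ} (A : Matrix (Fin n) (Fin n) ℝ) (B C : Fin n → ℝ) (D : ℝ)
    (T : ℕ) (p : (Fin T → ℝ) × (Fin T → ℝ)) : Prop :=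
  ∃ x : ℕ → Fin n → ℝ,
    (∀ t : Fin T, x ((t : ℕ) + 1) = A.mulVec (x t) + p.1 t • B) ∧
    (∀ t : Fin T, p.2 t = C ⬝ᵥ x t + D * p.1 t)

/-- Observability of `(A,B,C,D)` (order `n`): the observability matrix has full
rank, i.e., the zero-input output over `n` steps determines the initial state. -/
def Observable {n : ℕ} (A : Matrix (Fin n) (Fin n) ℝ) (C : Fin n → ℝ) : Prop :=
  ∀ x0 : Fin n → ℝ, (∀ k < n, C ⬝ᵥ (A ^ k).mulVec x0 = 0) → x0 = 0

/-- State trajectory from initial state `x0` and input `u`. -/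
def st {n : ℕ} (A : Matrix (Fin n) (Fin n) ℝ) (B : Fin n → ℝ)
    (x0 : Fin n → ℝ) (u : ℕ → ℝ) : ℕ → Fin n → ℝ
  | 0 => x0
  | t + 1 => A.mulVec (st A B x0 u t) + u t • B

lemma st_add {n : ℕ} (A : Matrix (Fin n) (Fin n) ℝ) (B : Fin n → ℝ)
    (x0 x0' : Fin n → ℝ) (u u' : ℕ → ℝ) (t : ℕ) :
    st A B (x0 + x0') (u + u') t = st A B x0 u t + st A B x0' u' t := by
  induction t with
  | zero => rfl
  | succ t ih =>
      simp only [st, ih, Matrix.mulVec_add, Pi.add_apply, add_smul]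
      abel

lemma st_smul {n : ℕ} (A : Matrix (Fin n) (Fin n) ℝ) (B : Fin n → ℝ)
    (c : ℝ) (x0 : Fin n → ℝ) (u : ℕ → ℝ) (t : ℕ) :
    st A B (c • x0) (c • u) t = c • st A B x0 u t := by
  induction t with
  | zero => rfl
  | succ t ih =>
      simp only [st, ih, Matrix.mulVec_smul, Pi.smul_apply, smul_eq_mul,
        smul_add]
      rw [← smul_smul]

lemma st_zero_input {n : ℕ} (A : Matrix (Fin n) (Fin n) ℝ) (B : Fin n → ℝ)
    (x0 : Fin n → ℝ) (t : ℕ) :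
    st A B x0 0 t = (A ^ t).mulVec x0 := by
  induction t with
  | zero => simp [st]
  | succ t ih =>
      show A.mulVec (st A B x0 0 t) + (0 : ℕ → ℝ) t • B = _
      rw [ih]
      simp [Matrix.mulVec_mulVec, ← pow_succ']

/-- Extend a finitely supported input to `ℕ` by zero. -/
def extd (T : ℕ) (u : Fin T → ℝ) : ℕ → ℝ :=
  fun t => if h : t < T then u ⟨t, h⟩ else 0

lemma extd_add (T : ℕ) (u u' : Fin T → ℝ) :
    extd T (u + u') = extd T u + extd T u' := by
  funext t; by_cases h : t < T <;> simp [extd, h]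

lemma extd_smul (T : ℕ) (c : ℝ) (u : Fin T → ℝ) :
    extd T (c • u) = c • extd T u := by
  funext t; by_cases h : t < T <;> simp [extd, h]

lemma extd_zero (T : ℕ) : extd T (0 : Fin T → ℝ) = 0 := by
  funext t; by_cases h : t < T <;> simp [extd, h]

/-- The linear map `(x0, u) ↦ (u, y)`. -/
def phi {n : ℕ} (A : Matrix (Fin n) (Fin n) ℝ) (B C : Fin n → ℝ) (D : ℝ) (T : ℕ) :
    ((Fin n → ℝ) × (Fin T → ℝ)) →ₗ[ℝ] ((Fin T → ℝ) × (Fin T → ℝ)) where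
  toFun p := (p.2, fun t => C ⬝ᵥ st A B p.1 (extd T p.2) (t : ℕ) + D * p.2 t)
  map_add' p q := by
    refine Prod.ext rfl ?_
    funext t
    simp only [Prod.snd_add, Prod.fst_add, extd_add, st_add, dotProduct_add,
      Pi.add_apply]
    ring
  map_smul' c p := by
    refine Prod.ext rfl ?_
    funext t
    simp only [Prod.smul_snd, Prod.smul_fst, extd_smul, st_smul,
      dotProduct_smul, Pi.smul_apply, smul_eq_mul, RingHom.id_apply]
    ring

/-- for an observable SISO LTI system of order `n` and `T ≥ n`, the
restricted behavior `B|_T` is a linear subspace of `ℝ^{2T}` of dimension `T + n`. -/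
theorem behavior_dimension {n : ℕ} (A : Matrix (Fin n) (Fin n) ℝ)
    (B C : Fin n → ℝ) (D : ℝ) (hobs : Observable A C) (T : ℕ) (hT : n ≤ T) :
    ∃ S : Submodule ℝ ((Fin T → ℝ) × (Fin T → ℝ)),
      (S : Set ((Fin T → ℝ) × (Fin T → ℝ))) = {p | InBehavior A B C D T p} ∧
      Module.finrank ℝ S = T + n := by
  refine ⟨LinearMap.range (phi A B C D T), ?_, ?_⟩
  · ext p
    simp only [SetLike.mem_coe, LinearMap.mem_range, Set.mem_setOf_eq]
    constructor
    · rintro ⟨⟨x0, u⟩, rfl⟩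
      refine ⟨st A B x0 (extd T u), ?_, fun t => rfl⟩
      intro t
      show st A B x0 (extd T u) ((t : ℕ) + 1) = _
      show A.mulVec (st A B x0 (extd T u) (t : ℕ)) + extd T u (t : ℕ) • B =
        A.mulVec (st A B x0 (extd T u) (t : ℕ)) + u t • B
      rw [show extd T u ((t : ℕ)) = u t from by simp [extd, t.isLt]]
    · rintro ⟨x, hrec, hout⟩
      refine ⟨(x 0, p.1), ?_⟩
      have hagree : ∀ t : ℕ, t < T → st A B (x 0) (extd T p.1) t = x t := by
        intro t
        induction t with
        | zero => intro _; rfl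
        | succ t ih =>
            intro ht
            have ht' : t < T := Nat.lt_of_succ_lt ht
            have hr := hrec ⟨t, ht'⟩
            show A.mulVec (st A B (x 0) (extd T p.1) t) + extd T p.1 t • B = x (t + 1)
            rw [ih ht', hr]
            congr 2
            simp [extd, ht']
      refine Prod.ext rfl ?_
      funext t
      show C ⬝ᵥ st A B (x 0) (extd T p.1) (t : ℕ) + D * p.1 t = p.2 t
      rw [hagree t t.isLt, hout t]
  · have hinj : Function.Injective (phi A B C D T) := by
      rw [← LinearMap.ker_eq_bot, LinearMap.ker_eq_bot']
      rintro ⟨x0, u⟩ h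
      have hu : u = 0 := congrArg Prod.fst h
      subst hu
      have hy := congrArg Prod.snd h
      simp only [Prod.snd_zero] at hy
      have hx0 : x0 = 0 := by
        apply hobs
        intro k hk
        have hkT : k < T := lt_of_lt_of_le hk hT
        have h1 := congrFun hy ⟨k, hkT⟩
        have h2 : C ⬝ᵥ st A B x0 (extd T (0 : Fin T → ℝ)) k + D * (0 : Fin T → ℝ) ⟨k, hkT⟩ = 0 := h1
        rw [extd_zero, st_zero_input] at h2
        simpa using h2
      simp [hx0]
    rw [LinearMap.finrank_range_of_inj hinj, Module.finrank_prod,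
      Module.finrank_pi, Module.finrank_pi]
    simp [Nat.add_comm]
end

section
/- Suppose the stacked Hankel data matrix H of order T_p+1 built from a trajectory of an observable SISO LTI system of order n satisfies rank(H) = T_p + 1 + n with T_p ≥ n. Then the column space of H equals the restricted behavior B|_{T_p+1} (suitably reordered); i.e., every (T_p+1)-long trajectory of the system is a linear combination of columns of H, and conversely. -/
open Matrix

/-!
The restricted behavior is the image of the linear map sending an initial state `x₀ ∈ ℝⁿ` and an
input `u ∈ ℝ^T` to the stacked pair `(u, y)` of input and resulting output, so its dimension is at
most `T + n`. Each column of the Hankel matrix is a window of the data trajectory, hence itself a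
trajectory, so the column space lies inside the behavior; the rank condition says that its
dimension already reaches `T + n`, which forces equality.
-/

section StateSpace

variable {R ι : Type*} [CommSemiring R] [Fintype ι] (A : Matrix ι ι R) (B C : ι → R) (D : R)

def stateMap : ℕ → ((ι → R) × (ℕ → R) →ₗ[R] ι → R)
  | 0 => LinearMap.fst R _ _
  | t + 1 => A.mulVecLin ∘ₗ stateMap t + (LinearMap.proj t ∘ₗ LinearMap.snd R _ _).smulRight B

@[simp]
lemma stateMap_succ (t : ℕ) (x₀ : ι → R) (u : ℕ → R) :
    stateMap A B (t + 1) (x₀, u) = A *ᵥ stateMap A B t (x₀, u) + u t • B := rfl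

lemma stateMap_eq_of_forall_lt {T : ℕ} (x : ℕ → ι → R) (u : ℕ → R)
    (hx : ∀ t < T, x (t + 1) = A *ᵥ x t + u t • B) :
    ∀ t ≤ T, stateMap A B t (x 0, u) = x t := by
  intro t ht
  induction t with
  | zero => rfl
  | succ t ih => rw [stateMap_succ, ih (by omega), hx t (by omega)]

/-- Inputs are padded with zeros beyond time `T`; the outputs at times `< T` never see the
padding. -/
noncomputable def trajectoryMap (T : ℕ) : (ι → R) × (Fin T → R) →ₗ[R] (Fin T ⊕ Fin T → R) where
  toFun p := Sum.elim p.2 fun t =>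
    C ⬝ᵥ stateMap A B t (p.1, Function.ExtendByZero.linearMap R Fin.val p.2) + D * p.2 t
  map_add' p q := by
    ext (t | t)
    · rfl
    · simp only [Prod.fst_add, Prod.snd_add, map_add, ← Prod.mk_add_mk, dotProduct_add,
        Sum.elim_inr, Pi.add_apply]
      ring
  map_smul' c p := by
    ext (t | t)
    · rfl
    · simp only [Prod.smul_fst, Prod.smul_snd, map_smul, ← Prod.smul_mk, dotProduct_smul,
        Sum.elim_inr, Pi.smul_apply, smul_eq_mul, RingHom.id_apply]
      ring

end StateSpace

lemma mem_range_trajectoryMap_iff {n T : ℕ} (A : Matrix (Fin n) (Fin n) ℝ) (B C : Fin n → ℝ)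
    (D : ℝ) (w : (Fin T → ℝ) × (Fin T → ℝ)) :
    Sum.elim w.1 w.2 ∈ LinearMap.range (trajectoryMap A B C D T) ↔ InBehavior A B C D T w := by
  have extend_val (u : Fin T → ℝ) (t : Fin T) :
      Function.ExtendByZero.linearMap ℝ Fin.val u t = u t :=
    Fin.val_injective.extend_apply u 0 t
  constructor
  · rintro ⟨⟨x₀, u⟩, h⟩
    have hu : u = w.1 := funext fun t => congrFun h (Sum.inl t)
    subst hu
    refine ⟨fun t => stateMap A B t (x₀, Function.ExtendByZero.linearMap ℝ Fin.val w.1), ?_, ?_⟩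
    · intro t
      dsimp only
      rw [stateMap_succ, extend_val]
    · exact fun t => (congrFun h (Sum.inr t)).symm
  · rintro ⟨x, hx, hy⟩
    refine ⟨(x 0, w.1), ?_⟩
    have hstate := stateMap_eq_of_forall_lt A B x (Function.ExtendByZero.linearMap ℝ Fin.val w.1)
      fun t ht => by rw [hx ⟨t, ht⟩, ← extend_val w.1 ⟨t, ht⟩]
    ext (t | t)
    · rfl
    · change C ⬝ᵥ stateMap A B t (x 0, _) + D * w.1 t = w.2 t
      rw [hstate t t.isLt.le, hy t]

lemma finrank_range_trajectoryMap_le {K ι : Type*} [Field K] [Fintype ι] (A : Matrix ι ι K)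
    (B C : ι → K) (D : K) (T : ℕ) :
    Module.finrank K (LinearMap.range (trajectoryMap A B C D T)) ≤ T + Fintype.card ι :=
  (LinearMap.finrank_range_le _).trans_eq <| by
    rw [Module.finrank_prod, Module.finrank_fintype_fun_eq_card, Module.finrank_fin_fun, add_comm]

lemma inBehavior_window {n T N : ℕ} (A : Matrix (Fin n) (Fin n) ℝ) (B C : Fin n → ℝ) (D : ℝ)
    (u y : ℕ → ℝ) (x : ℕ → Fin n → ℝ)
    (hx : ∀ t < N, x (t + 1) = A *ᵥ x t + u t • B) (hy : ∀ t < N, y t = C ⬝ᵥ x t + D * u t)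
    (j : ℕ) (hj : j + T ≤ N) :
    InBehavior A B C D T (fun t => u (t + j), fun t => y (t + j)) := by
  refine ⟨fun t => x (t + j), fun t => ?_, fun t => hy _ (by omega)⟩
  change x (t + 1 + j) = A *ᵥ x (t + j) + u (t + j) • B
  rw [Nat.add_right_comm]
  exact hx _ (by omega)

theorem column_space_eq_behavior_general {n Tp Td : ℕ}
    (A : Matrix (Fin n) (Fin n) ℝ) (B C : Fin n → ℝ) (D : ℝ)
    (ud yd : ℕ → ℝ) (xd : ℕ → Fin n → ℝ)
    (hrec : ∀ t < Td, xd (t + 1) = A.mulVec (xd t) + ud t • B)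
    (hout : ∀ t < Td, yd t = C ⬝ᵥ xd t + D * ud t)
    (H : Matrix (Fin (Tp + 1) ⊕ Fin (Tp + 1)) (Fin (Td - Tp)) ℝ)
    (hHu : ∀ (i : Fin (Tp + 1)) (j : Fin (Td - Tp)), H (Sum.inl i) j = ud (i + j))
    (hHy : ∀ (i : Fin (Tp + 1)) (j : Fin (Td - Tp)), H (Sum.inr i) j = yd (i + j))
    (hrank : H.rank = Tp + 1 + n) :
    ∀ w : (Fin (Tp + 1) → ℝ) × (Fin (Tp + 1) → ℝ),
      InBehavior A B C D (Tp + 1) w ↔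
      ∃ g : Fin (Td - Tp) → ℝ, H.mulVec g = Sum.elim w.1 w.2 := by
  have hcols : LinearMap.range H.mulVecLin ≤ LinearMap.range (trajectoryMap A B C D (Tp + 1)) := by
    rw [Matrix.range_mulVecLin, Submodule.span_le]
    rintro _ ⟨j, rfl⟩
    have hcol : H.col j =
        Sum.elim (fun i : Fin (Tp + 1) => ud (i + j)) (fun i : Fin (Tp + 1) => yd (i + j)) := by
      ext (i | i)
      · exact hHu i j
      · exact hHy i j
    rw [SetLike.mem_coe, hcol]
    exact (mem_range_trajectoryMap_iff A B C D (_, _)).2 <|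
      inBehavior_window A B C D ud yd xd hrec hout j (by omega)
  have hrange : LinearMap.range H.mulVecLin = LinearMap.range (trajectoryMap A B C D (Tp + 1)) := by
    refine Submodule.eq_of_le_of_finrank_le hcols ?_
    calc Module.finrank ℝ (LinearMap.range (trajectoryMap A B C D (Tp + 1))) ≤ Tp + 1 + n := by
          simpa using finrank_range_trajectoryMap_le A B C D (Tp + 1)
      _ = H.rank := hrank.symm
  intro w
  rw [← mem_range_trajectoryMap_iff, ← hrange]
  rfl

/-- if the stacked Hankel matrix `H` of order `T_p + 1`, built from a
trajectory of an observable SISO LTI system of order `n` with `T_p ≥ n`, satisfies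
the low-rank condition `rank H = T_p + 1 + n`, then the column space of `H` equals
the restricted behavior `B|_{T_p+1}`: a pair `w` is a `(T_p+1)`-long trajectory iff
it is a linear combination of the columns of `H`. -/
theorem column_space_eq_behavior {n Tp Td : ℕ}
    (A : Matrix (Fin n) (Fin n) ℝ) (B C : Fin n → ℝ) (D : ℝ)
    (hobs : Observable A C) (hTp : n ≤ Tp) (hTd : Tp + 1 ≤ Td)
    (ud yd : ℕ → ℝ) (xd : ℕ → Fin n → ℝ)
    (hrec : ∀ t < Td, xd (t + 1) = A.mulVec (xd t) + ud t • B)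
    (hout : ∀ t < Td, yd t = C ⬝ᵥ xd t + D * ud t)
    (H : Matrix (Fin (Tp + 1) ⊕ Fin (Tp + 1)) (Fin (Td - Tp)) ℝ)
    (hHu : ∀ (i : Fin (Tp + 1)) (j : Fin (Td - Tp)), H (Sum.inl i) j = ud (i + j))
    (hHy : ∀ (i : Fin (Tp + 1)) (j : Fin (Td - Tp)), H (Sum.inr i) j = yd (i + j))
    (hrank : H.rank = Tp + 1 + n) :
    ∀ w : (Fin (Tp + 1) → ℝ) × (Fin (Tp + 1) → ℝ),
      InBehavior A B C D (Tp + 1) w ↔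
      ∃ g : Fin (Td - Tp) → ℝ, H.mulVec g = Sum.elim w.1 w.2 :=
  column_space_eq_behavior_general A B C D ud yd xd hrec hout H hHu hHy hrank
end

section
/- For an observable SISO LTI system of order n and any T_p ≥ n, if two T_p+1-long trajectories (u, y) and (u, y') share the same input sequence and agree on the first T_p output samples, then y(T_p) = y'(T_p). In other words, given T_p past input/output samples and the current input, the current output is uniquely determined. -/
open Matrix

/-- for an observable SISO LTI system of order `n` and `T_p ≥ n`, two
`(T_p+1)`-long trajectories with the same input whose outputs agree on the first
`T_p` samples also agree on the last output sample: the current output is uniquely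
determined by `T_p` past input/output samples and the current input. -/
theorem output_uniqueness {n Tp : ℕ} (A : Matrix (Fin n) (Fin n) ℝ)
    (B C : Fin n → ℝ) (D : ℝ) (hobs : Observable A C) (hTp : n ≤ Tp)
    (u y y' : ℕ → ℝ) (x x' : ℕ → Fin n → ℝ)
    (hrec : ∀ t < Tp + 1, x (t + 1) = A.mulVec (x t) + u t • B)
    (hout : ∀ t < Tp + 1, y t = C ⬝ᵥ x t + D * u t)
    (hrec' : ∀ t < Tp + 1, x' (t + 1) = A.mulVec (x' t) + u t • B)
    (hout' : ∀ t < Tp + 1, y' t = C ⬝ᵥ x' t + D * u t)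
    (hagree : ∀ t < Tp, y t = y' t) :
    y Tp = y' Tp := by
  have hdiff : ∀ t, t ≤ Tp → x t - x' t = (A ^ t).mulVec (x 0 - x' 0) := by
    intro t ht
    induction t with
    | zero => simp
    | succ k ih =>
      have hk : k ≤ Tp := Nat.le_of_succ_le ht
      have hk1 : k < Tp + 1 := Nat.lt_succ_of_le hk
      rw [hrec k hk1, hrec' k hk1]
      have : A.mulVec (x k) + u k • B - (A.mulVec (x' k) + u k • B)
          = A.mulVec (x k - x' k) := by
        rw [Matrix.mulVec_sub]; abel
      rw [this, ih hk, pow_succ', Matrix.mulVec_mulVec]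
  have hx0 : x 0 - x' 0 = 0 := by
    apply hobs
    intro k hk
    have hkTp : k < Tp := lt_of_lt_of_le hk hTp
    have hk1 : k < Tp + 1 := Nat.lt_succ_of_lt hkTp
    have hy := hagree k hkTp
    rw [hout k hk1, hout' k hk1] at hy
    have hC : C ⬝ᵥ x k = C ⬝ᵥ x' k := by linarith
    rw [← hdiff k (le_of_lt hkTp), dotProduct_sub, hC, sub_self]
  have hxTp : x Tp = x' Tp := by
    have := hdiff Tp le_rfl
    rw [hx0, Matrix.mulVec_zero] at this
    exact sub_eq_zero.mp this
  rw [hout Tp (Nat.lt_succ_self _), hout' Tp (Nat.lt_succ_self _), hxTp]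
end

section
/- Under the low-rank condition rank([U_p; U_f; Y_p; Y_f]) = T_p + 1 + n (T_p ≥ n, observable system of order n), the linear system H g = col(u_ini, u_pred, y_ini, y_pred) is solvable in g if and only if col(u_ini, u_pred, y_ini, y_pred) is a trajectory of the system; moreover for given (u_ini, u_pred, y_ini) consistent with some trajectory, the resulting y_pred = Y_f g is the same for every solution g of the first three block equations. -/
open Matrix

namespace WillemsAux

variable {n T : ℕ}

/-- closed form for the state. -/
lemma state_closed (A : Matrix (Fin n) (Fin n) ℝ) (B : Fin n → ℝ)
    (u : Fin T → ℝ) (x : ℕ → Fin n → ℝ)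
    (hx : ∀ t : Fin T, x ((t : ℕ) + 1) = A.mulVec (x t) + u t • B) :
    ∀ t, t ≤ T → x t = (A ^ t).mulVec (x 0) +
      ∑ k : Fin T, if (k : ℕ) < t then u k • (A ^ (t - 1 - (k : ℕ))).mulVec B else 0 := by
  intro t
  induction t with
  | zero => intro _; simp [Matrix.one_mulVec]
  | succ t ih =>
    intro ht
    have ht' : t < T := lt_of_lt_of_le (Nat.lt_succ_self t) ht
    have hrec := hx ⟨t, ht'⟩
    simp only [Fin.val_mk] at hrec
    rw [hrec, ih (le_of_lt ht')]
    have hsplit : ∀ (f : Fin T → Fin n → ℝ),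
        (∑ k : Fin T, if (k : ℕ) < t + 1 then f k else 0) =
        (∑ k : Fin T, if (k : ℕ) < t then f k else 0) + f ⟨t, ht'⟩ := by
      intro f
      have : ∀ k : Fin T, (if (k : ℕ) < t + 1 then f k else 0) =
          (if (k : ℕ) < t then f k else 0) + (if k = ⟨t, ht'⟩ then f k else 0) := by
        intro k
        rcases lt_trichotomy (k : ℕ) t with h | h | h
        · rw [if_pos (by omega), if_pos h, if_neg (by intro hk; subst hk; simp at h), add_zero]
        · rw [if_pos (by omega), if_neg (by omega), if_pos (by apply Fin.ext; simp [h]), zero_add]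
        · rw [if_neg (by omega), if_neg (by omega), if_neg (by intro hk; subst hk; simp at h), add_zero]
      rw [Finset.sum_congr rfl fun k _ => this k, Finset.sum_add_distrib]
      congr 1
      rw [Finset.sum_ite_eq' _ _ _, if_pos (Finset.mem_univ _)]
    rw [hsplit]
    rw [Matrix.mulVec_add]
    have h1 : A.mulVec ((A ^ t).mulVec (x 0)) = (A ^ (t + 1)).mulVec (x 0) := by
      rw [Matrix.mulVec_mulVec, ← pow_succ']
    have h2 : A.mulVec (∑ k : Fin T, if (k : ℕ) < t then u k • (A ^ (t - 1 - (k : ℕ))).mulVec B else 0)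
        = ∑ k : Fin T, if (k : ℕ) < t then u k • (A ^ (t + 1 - 1 - (k : ℕ))).mulVec B else 0 := by
      rw [← Matrix.mulVecLin_apply, map_sum]
      refine Finset.sum_congr rfl fun k _ => ?_
      split_ifs with h
      · rw [Matrix.mulVecLin_apply, Matrix.mulVec_smul, Matrix.mulVec_mulVec, ← pow_succ',
          show t - 1 - (k : ℕ) + 1 = t + 1 - 1 - (k : ℕ) by omega]
      · simp
    rw [h1, h2]
    have h3 : u ⟨t, ht'⟩ • (A ^ (t + 1 - 1 - t)).mulVec B = u ⟨t, ht'⟩ • B := by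
      simp [Matrix.one_mulVec]
    rw [show t + 1 - 1 - ((⟨t, ht'⟩ : Fin T) : ℕ) = t + 1 - 1 - t from rfl] at *
    rw [h3]
    abel


lemma dot_sum {ι : Type*} [Fintype ι] (C : Fin n → ℝ) (f : ι → Fin n → ℝ) :
    C ⬝ᵥ (∑ k, f k) = ∑ k, C ⬝ᵥ f k := by
  simp only [dotProduct, Finset.sum_apply, Finset.mul_sum]
  exact Finset.sum_comm

noncomputable def trajOut (A : Matrix (Fin n) (Fin n) ℝ) (B C : Fin n → ℝ) (D : ℝ)
    (u : Fin T → ℝ) (x0 : Fin n → ℝ) (t : Fin T) : ℝ :=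
  C ⬝ᵥ (A ^ (t : ℕ)).mulVec x0
    + (∑ k : Fin T, if (k : ℕ) < (t : ℕ) then u k * (C ⬝ᵥ (A ^ ((t : ℕ) - 1 - (k : ℕ))).mulVec B) else 0)
    + D * u t

noncomputable def trajMap (A : Matrix (Fin n) (Fin n) ℝ) (B C : Fin n → ℝ) (D : ℝ) (T : ℕ) :
    ((Fin n → ℝ) × (Fin T → ℝ)) →ₗ[ℝ] ((Fin T ⊕ Fin T) → ℝ) where
  toFun p := Sum.elim p.2 (trajOut A B C D p.2 p.1)
  map_add' p q := by
    funext s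
    cases s with
    | inl t => simp
    | inr t =>
      simp only [Sum.elim_inr, Prod.fst_add, Prod.snd_add, Pi.add_apply, trajOut,
        Matrix.mulVec_add, dotProduct_add]
      have hsplit : ∀ k : Fin T,
          (if (k : ℕ) < (t : ℕ) then (p.2 k + q.2 k) * (C ⬝ᵥ (A ^ ((t : ℕ) - 1 - (k : ℕ))).mulVec B) else 0)
          = (if (k : ℕ) < (t : ℕ) then p.2 k * (C ⬝ᵥ (A ^ ((t : ℕ) - 1 - (k : ℕ))).mulVec B) else 0)
            + (if (k : ℕ) < (t : ℕ) then q.2 k * (C ⬝ᵥ (A ^ ((t : ℕ) - 1 - (k : ℕ))).mulVec B) else 0) := by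
        intro k; split_ifs <;> ring
      rw [Finset.sum_congr rfl fun k _ => hsplit k, Finset.sum_add_distrib]
      ring
  map_smul' c p := by
    funext s
    cases s with
    | inl t => simp
    | inr t =>
      simp only [Sum.elim_inr, Prod.smul_fst, Prod.smul_snd, Pi.smul_apply, trajOut,
        Matrix.mulVec_smul, dotProduct_smul, smul_eq_mul, RingHom.id_apply]
      have hsplit : ∀ k : Fin T,
          (if (k : ℕ) < (t : ℕ) then (c * p.2 k) * (C ⬝ᵥ (A ^ ((t : ℕ) - 1 - (k : ℕ))).mulVec B) else 0)
          = c * (if (k : ℕ) < (t : ℕ) then p.2 k * (C ⬝ᵥ (A ^ ((t : ℕ) - 1 - (k : ℕ))).mulVec B) else 0) := by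
        intro k; split_ifs <;> ring
      rw [Finset.sum_congr rfl fun k _ => hsplit k, ← Finset.mul_sum]
      ring

lemma inBehavior_iff (A : Matrix (Fin n) (Fin n) ℝ) (B C : Fin n → ℝ) (D : ℝ)
    (u y : Fin T → ℝ) :
    InBehavior A B C D T (u, y) ↔ Sum.elim u y ∈ LinearMap.range (trajMap A B C D T) := by
  constructor
  · rintro ⟨x, hx, hy⟩
    refine ⟨(x 0, u), ?_⟩
    funext s
    cases s with
    | inl t => rfl
    | inr t =>
      show trajOut A B C D u (x 0) t = y t
      rw [show y t = C ⬝ᵥ x (t : ℕ) + D * u t from hy t]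
      have := state_closed A B u x hx (t : ℕ) (le_of_lt t.isLt)
      rw [this, trajOut, dotProduct_add, dot_sum]
      congr 2
      refine Finset.sum_congr rfl fun k _ => ?_
      split_ifs
      · rw [dotProduct_smul, smul_eq_mul]
      · simp
  · rintro ⟨⟨x0, u'⟩, hp⟩
    have hu : u' = u := funext fun t => congrFun hp (Sum.inl t)
    subst hu
    set x : ℕ → Fin n → ℝ := fun t => Nat.rec x0
      (fun t xt => A.mulVec xt + (if h : t < T then u' ⟨t, h⟩ else 0) • B) t with hxdef
    have hx : ∀ t : Fin T, x ((t : ℕ) + 1) = A.mulVec (x t) + u' t • B := by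
      intro t
      show A.mulVec (x t) + (if h : (t : ℕ) < T then u' ⟨(t : ℕ), h⟩ else 0) • B = _
      rw [dif_pos t.isLt]
    refine ⟨x, hx, fun t => ?_⟩
    show y t = C ⬝ᵥ x (t : ℕ) + D * u' t
    have hyt : y t = trajOut A B C D u' x0 t := (congrFun hp (Sum.inr t)).symm
    have hx0 : x 0 = x0 := rfl
    have hclosed := state_closed A B u' x hx (t : ℕ) (le_of_lt t.isLt)
    rw [hyt, trajOut, hclosed, hx0, dotProduct_add, dot_sum]
    congr 2
    refine Finset.sum_congr rfl fun k _ => ?_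
    split_ifs
    · rw [dotProduct_smul, smul_eq_mul]
    · simp

lemma trajMap_inj (A : Matrix (Fin n) (Fin n) ℝ) (B C : Fin n → ℝ) (D : ℝ)
    (hobs : Observable A C) (hnT : n < T) :
    Function.Injective (trajMap A B C D T) := by
  rw [← LinearMap.ker_eq_bot, LinearMap.ker_eq_bot']
  intro p hp
  have hu : p.2 = 0 := funext fun t => congrFun hp (Sum.inl t)
  have hy : ∀ t : Fin T, trajOut A B C D p.2 p.1 t = 0 := fun t => congrFun hp (Sum.inr t)
  have hx : p.1 = 0 := by
    refine hobs p.1 fun k hk => ?_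
    have := hy ⟨k, lt_trans hk hnT⟩
    simp [trajOut, hu] at this
    exact this
  calc p = (p.1, p.2) := rfl
    _ = 0 := by rw [hx, hu]; rfl


lemma unique_out (A : Matrix (Fin n) (Fin n) ℝ) (B C : Fin n → ℝ) (D : ℝ)
    (hobs : Observable A C) (hnT : n < T)
    (u y y' : Fin T → ℝ)
    (h : InBehavior A B C D T (u, y)) (h' : InBehavior A B C D T (u, y'))
    (hpast : ∀ t : Fin T, (t : ℕ) + 1 < T → y t = y' t) :
    ∀ t : Fin T, y t = y' t := by
  obtain ⟨x, hx, hy⟩ := h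
  obtain ⟨x', hx', hy'⟩ := h'
  set δ : ℕ → Fin n → ℝ := fun t => x t - x' t with hδdef
  have hδ : ∀ t : Fin T, δ ((t : ℕ) + 1) = A.mulVec (δ t) + (0 : Fin T → ℝ) t • B := by
    intro t
    show x ((t : ℕ) + 1) - x' ((t : ℕ) + 1) = _
    rw [hx t, hx' t]
    show _ = A.mulVec (x (t : ℕ) - x' (t : ℕ)) + _
    rw [Matrix.mulVec_sub]
    show _ + (u, y).1 t • B - (_ + (u, y').1 t • B) = _
    simp only [Pi.zero_apply, zero_smul, add_zero]
    abel
  have hclosed := state_closed A B 0 δ hδ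
  have hδt : ∀ t : ℕ, t ≤ T → δ t = (A ^ t).mulVec (δ 0) := by
    intro t ht
    rw [hclosed t ht]
    simp
  have hCδ : ∀ t : Fin T, y t - y' t = C ⬝ᵥ δ (t : ℕ) := by
    intro t
    rw [show y t = C ⬝ᵥ x (t : ℕ) + D * u t from hy t,
      show y' t = C ⬝ᵥ x' (t : ℕ) + D * u t from hy' t]
    show _ = C ⬝ᵥ (x (t : ℕ) - x' (t : ℕ))
    rw [dotProduct_sub]
    ring
  have hδ0 : δ 0 = 0 := by
    refine hobs (δ 0) fun k hk => ?_
    have hkT : k < T := lt_trans hk hnT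
    have h1 := hCδ ⟨k, hkT⟩
    have h2 := hpast ⟨k, hkT⟩ (by simp; omega)
    rw [h2, sub_self] at h1
    rw [← hδt k (le_of_lt hkT)]
    exact h1.symm
  intro t
  have := hCδ t
  rw [hδt (t : ℕ) (le_of_lt t.isLt), hδ0, Matrix.mulVec_zero, dotProduct_zero] at this
  linarith

end WillemsAux

open WillemsAux

/-- under the low-rank condition `rank [U_p; U_f; Y_p; Y_f] = T_p+1+n`
(`T_p ≥ n`, observable system of order `n`), the equation
`H g = col(u_ini, u_pred, y_ini, y_pred)` is solvable in `g` iff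
`col(u_ini, u_pred, y_ini, y_pred)` is a trajectory of the system; moreover, for
given `(u_ini, u_pred, y_ini)` consistent with some trajectory, the predicted
output `y_pred = Y_f g` is the same for every `g` solving the first three block
equations. -/
theorem willems_predictor {n Tp Td : ℕ}
    (A : Matrix (Fin n) (Fin n) ℝ) (B C : Fin n → ℝ) (D : ℝ)
    (hobs : Observable A C) (hTp : n ≤ Tp) (hTd : Tp + 1 ≤ Td)
    (ud yd : ℕ → ℝ) (xd : ℕ → Fin n → ℝ)
    (hrec : ∀ t < Td, xd (t + 1) = A.mulVec (xd t) + ud t • B)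
    (hout : ∀ t < Td, yd t = C ⬝ᵥ xd t + D * ud t)
    (H : Matrix (Fin (Tp + 1) ⊕ Fin (Tp + 1)) (Fin (Td - Tp)) ℝ)
    (hHu : ∀ (i : Fin (Tp + 1)) (j : Fin (Td - Tp)), H (Sum.inl i) j = ud (i + j))
    (hHy : ∀ (i : Fin (Tp + 1)) (j : Fin (Td - Tp)), H (Sum.inr i) j = yd (i + j))
    (hrank : H.rank = Tp + 1 + n) :
    (∀ (uini yini : Fin Tp → ℝ) (upred ypred : ℝ),
      (∃ g : Fin (Td - Tp) → ℝ,
          H.mulVec g = Sum.elim (Fin.snoc uini upred) (Fin.snoc yini ypred)) ↔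
      InBehavior A B C D (Tp + 1) (Fin.snoc uini upred, Fin.snoc yini ypred)) ∧
    (∀ (uini yini : Fin Tp → ℝ) (upred : ℝ),
      (∃ ypred : ℝ,
        InBehavior A B C D (Tp + 1) (Fin.snoc uini upred, Fin.snoc yini ypred)) →
      ∀ g g' : Fin (Td - Tp) → ℝ,
        (∀ i : Fin Tp, ∑ j : Fin (Td - Tp), ud ((i : ℕ) + (j : ℕ)) * g j = uini i) →
        (∑ j : Fin (Td - Tp), ud (Tp + (j : ℕ)) * g j = upred) →
        (∀ i : Fin Tp, ∑ j : Fin (Td - Tp), yd ((i : ℕ) + (j : ℕ)) * g j = yini i) →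
        (∀ i : Fin Tp, ∑ j : Fin (Td - Tp), ud ((i : ℕ) + (j : ℕ)) * g' j = uini i) →
        (∑ j : Fin (Td - Tp), ud (Tp + (j : ℕ)) * g' j = upred) →
        (∀ i : Fin Tp, ∑ j : Fin (Td - Tp), yd ((i : ℕ) + (j : ℕ)) * g' j = yini i) →
        ∑ j : Fin (Td - Tp), yd (Tp + (j : ℕ)) * g j = ∑ j : Fin (Td - Tp), yd (Tp + (j : ℕ)) * g' j) := by
  have hnT : n < Tp + 1 := Nat.lt_succ_of_le hTp
  have hb : ∀ (t : Fin (Tp + 1)) (j : Fin (Td - Tp)), (t : ℕ) + (j : ℕ) < Td := by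
    intro t j
    have h1 := t.isLt
    have h2 := j.isLt
    omega
  have hcol : ∀ g : Fin (Td - Tp) → ℝ,
      InBehavior A B C D (Tp + 1)
        ((fun t : Fin (Tp + 1) => ∑ j : Fin (Td - Tp), ud ((t : ℕ) + (j : ℕ)) * g j),
         (fun t : Fin (Tp + 1) => ∑ j : Fin (Td - Tp), yd ((t : ℕ) + (j : ℕ)) * g j)) := by
    intro g
    refine ⟨fun t => ∑ j : Fin (Td - Tp), g j • xd (t + (j : ℕ)), ?_, ?_⟩
    · intro t
      show (∑ j : Fin (Td - Tp), g j • xd ((t : ℕ) + 1 + (j : ℕ))) = _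
      have hstep : ∀ j : Fin (Td - Tp), xd ((t : ℕ) + 1 + (j : ℕ))
          = A.mulVec (xd ((t : ℕ) + (j : ℕ))) + ud ((t : ℕ) + (j : ℕ)) • B := by
        intro j
        rw [show (t : ℕ) + 1 + (j : ℕ) = ((t : ℕ) + (j : ℕ)) + 1 by omega]
        exact hrec _ (hb t j)
      calc (∑ j : Fin (Td - Tp), g j • xd ((t : ℕ) + 1 + (j : ℕ)))
          = ∑ j : Fin (Td - Tp),
              (g j • A.mulVec (xd ((t : ℕ) + (j : ℕ))) + (ud ((t : ℕ) + (j : ℕ)) * g j) • B) := by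
            refine Finset.sum_congr rfl fun j _ => ?_
            rw [hstep j, smul_add, smul_smul, mul_comm]
        _ = A.mulVec (∑ j : Fin (Td - Tp), g j • xd ((t : ℕ) + (j : ℕ)))
              + (∑ j : Fin (Td - Tp), ud ((t : ℕ) + (j : ℕ)) * g j) • B := by
            rw [Finset.sum_add_distrib, Finset.sum_smul]
            congr 1
            rw [← Matrix.mulVecLin_apply, map_sum]
            refine Finset.sum_congr rfl fun j _ => ?_
            rw [_root_.map_smul A.mulVecLin (g j) (xd ((t : ℕ) + (j : ℕ)))]
            rfl
    · intro t
      show (∑ j : Fin (Td - Tp), yd ((t : ℕ) + (j : ℕ)) * g j)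
        = C ⬝ᵥ (∑ j : Fin (Td - Tp), g j • xd ((t : ℕ) + (j : ℕ)))
          + D * (∑ j : Fin (Td - Tp), ud ((t : ℕ) + (j : ℕ)) * g j)
      rw [dot_sum, Finset.mul_sum, ← Finset.sum_add_distrib]
      refine Finset.sum_congr rfl fun j _ => ?_
      rw [hout _ (hb t j), dotProduct_smul, smul_eq_mul]
      ring
  have hvec : ∀ g : Fin (Td - Tp) → ℝ, H.mulVec g =
      Sum.elim (fun t : Fin (Tp + 1) => ∑ j : Fin (Td - Tp), ud ((t : ℕ) + (j : ℕ)) * g j)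
               (fun t : Fin (Tp + 1) => ∑ j : Fin (Td - Tp), yd ((t : ℕ) + (j : ℕ)) * g j) := by
    intro g
    funext s
    cases s with
    | inl i => simp [Matrix.mulVec, dotProduct, hHu]
    | inr i => simp [Matrix.mulVec, dotProduct, hHy]
  have hle : LinearMap.range H.mulVecLin ≤ LinearMap.range (trajMap A B C D (Tp + 1)) := by
    rintro v ⟨g, rfl⟩
    rw [Matrix.mulVecLin_apply, hvec g]
    exact (inBehavior_iff A B C D _ _).mp (hcol g)
  have hfin : Module.finrank ℝ ↥(LinearMap.range (trajMap A B C D (Tp + 1))) = Tp + 1 + n := by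
    rw [LinearMap.finrank_range_of_inj (trajMap_inj A B C D hobs hnT)]
    simp [Module.finrank_prod]
    omega
  have heq : LinearMap.range H.mulVecLin = LinearMap.range (trajMap A B C D (Tp + 1)) := by
    refine Submodule.eq_of_le_of_finrank_le hle ?_
    rw [hfin]
    rw [Matrix.rank] at hrank
    omega
  constructor
  · intro uini yini upred ypred
    constructor
    · rintro ⟨g, hg⟩
      rw [hvec g] at hg
      have hu : (fun t : Fin (Tp + 1) => ∑ j : Fin (Td - Tp), ud ((t : ℕ) + (j : ℕ)) * g j)
          = Fin.snoc uini upred := funext fun t => congrFun hg (Sum.inl t)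
      have hy : (fun t : Fin (Tp + 1) => ∑ j : Fin (Td - Tp), yd ((t : ℕ) + (j : ℕ)) * g j)
          = Fin.snoc yini ypred := funext fun t => congrFun hg (Sum.inr t)
      have hB := hcol g
      rw [hu, hy] at hB
      exact hB
    · intro hB
      have hmem := (inBehavior_iff A B C D _ _).mp hB
      rw [← heq] at hmem
      obtain ⟨g, hg⟩ := hmem
      exact ⟨g, by rw [← Matrix.mulVecLin_apply]; exact hg⟩
  · intro uini yini upred _ g g' hgu hgU hgy hg'u hg'U hg'y
    have hu : (fun t : Fin (Tp + 1) => ∑ j : Fin (Td - Tp), ud ((t : ℕ) + (j : ℕ)) * g j)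
        = Fin.snoc uini upred := by
      funext t
      induction t using Fin.lastCases with
      | last => simpa using hgU
      | cast i => simpa using hgu i
    have hu' : (fun t : Fin (Tp + 1) => ∑ j : Fin (Td - Tp), ud ((t : ℕ) + (j : ℕ)) * g' j)
        = Fin.snoc uini upred := by
      funext t
      induction t using Fin.lastCases with
      | last => simpa using hg'U
      | cast i => simpa using hg'u i
    have hbg := hcol g
    rw [hu] at hbg
    have hbg' := hcol g'
    rw [hu'] at hbg'
    have hpast : ∀ t : Fin (Tp + 1), (t : ℕ) + 1 < Tp + 1 →
        (fun t : Fin (Tp + 1) => ∑ j : Fin (Td - Tp), yd ((t : ℕ) + (j : ℕ)) * g j) t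
        = (fun t : Fin (Tp + 1) => ∑ j : Fin (Td - Tp), yd ((t : ℕ) + (j : ℕ)) * g' j) t := by
      intro t ht
      have hlt : (t : ℕ) < Tp := by omega
      have h1 := hgy ⟨(t : ℕ), hlt⟩
      have h2 := hg'y ⟨(t : ℕ), hlt⟩
      exact h1.trans h2.symm
    have hfinal := unique_out A B C D hobs hnT (Fin.snoc uini upred) _ _ hbg hbg' hpast
      (Fin.last Tp)
    simpa using hfinal
end

section
/- For a SISO LTI system of order n and relative degree L with T_p ≥ n, if two trajectories of length T_p + L + 1 share the same output sequence and agree on the first T_p input samples, and the system is observable, then they agree on the input sample at time T_p (the input L steps before the end). Hence the delayed inverse prediction u(t − L) in the data-driven inverse predictor is unique. -/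
open Matrix Finset

noncomputable def output {n : ℕ} (A : Matrix (Fin n) (Fin n) ℝ) (B C : Fin n → ℝ)
    (D : ℝ) (x0 : Fin n → ℝ) (u : ℕ → ℝ) (t : ℕ) : ℝ :=
  C ⬝ᵥ (A ^ t).mulVec x0 +
    (∑ k ∈ Finset.range t, (C ⬝ᵥ (A ^ (t - 1 - k)).mulVec B) * u k) + D * u t

noncomputable def markov {n : ℕ} (A : Matrix (Fin n) (Fin n) ℝ) (B C : Fin n → ℝ)
    (D : ℝ) (k : ℕ) : ℝ :=
  if k = 0 then D else C ⬝ᵥ (A ^ (k - 1)).mulVec B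

/-- for an observable SISO LTI system of order `n` and relative
degree `L`, with `T_p ≥ n`, two trajectories of length `T_p + L + 1` sharing the
same output sequence and agreeing on the first `T_p` input samples also agree on
the input at time `T_p`; hence the delayed inverse prediction `u(t − L)` of the
data-driven inverse predictor is unique. -/
theorem inverse_prediction_unique {n L Tp : ℕ}
    (A : Matrix (Fin n) (Fin n) ℝ) (B C : Fin n → ℝ) (D : ℝ)
    (hobs : Observable A C) (hTp : n ≤ Tp)
    (hD : 1 ≤ L → D = 0)
    (hzero : ∀ k, 1 ≤ k → k < L → C ⬝ᵥ (A ^ (k - 1)).mulVec B = 0)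
    (hmL : markov A B C D L ≠ 0)
    (x0 x0' : Fin n → ℝ) (u u' y y' : ℕ → ℝ)
    (htraj : ∀ t < Tp + L + 1, y t = output A B C D x0 u t)
    (htraj' : ∀ t < Tp + L + 1, y' t = output A B C D x0' u' t)
    (hy : ∀ t < Tp + L + 1, y t = y' t)
    (hu : ∀ t < Tp, u t = u' t) :
    u Tp = u' Tp := by
  have hyeq : ∀ t < Tp + L + 1, output A B C D x0 u t = output A B C D x0' u' t := by
    intro t ht
    rw [← htraj t ht, ← htraj' t ht]
    exact hy t ht
  -- Step 1: initial states agree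
  have hx : x0 = x0' := by
    have hd : ∀ k < n, C ⬝ᵥ (A ^ k).mulVec (x0 - x0') = 0 := by
      intro k hk
      have hkTp : k < Tp := lt_of_lt_of_le hk hTp
      have h := hyeq k (by omega)
      unfold output at h
      have hsum : ∑ j ∈ Finset.range k, (C ⬝ᵥ (A ^ (k - 1 - j)).mulVec B) * u j
          = ∑ j ∈ Finset.range k, (C ⬝ᵥ (A ^ (k - 1 - j)).mulVec B) * u' j := by
        refine Finset.sum_congr rfl fun j hj => ?_
        rw [hu j (lt_trans (Finset.mem_range.mp hj) hkTp)]
      have huk : u k = u' k := hu k hkTp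
      rw [Matrix.mulVec_sub, dotProduct_sub]
      rw [hsum, huk] at h
      linarith
    have h0 := hobs (x0 - x0') hd
    exact sub_eq_zero.mp h0
  subst hx
  -- Step 2: use output at time Tp + L
  have h := hyeq (Tp + L) (by omega)
  unfold output at h
  have hsum : ∑ k ∈ Finset.range (Tp + L),
        ((C ⬝ᵥ (A ^ (Tp + L - 1 - k)).mulVec B) * u k
          - (C ⬝ᵥ (A ^ (Tp + L - 1 - k)).mulVec B) * u' k)
      = D * u' (Tp + L) - D * u (Tp + L) := by
    rw [Finset.sum_sub_distrib]
    linarith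
  rcases Nat.eq_zero_or_pos L with hL | hL
  · -- L = 0 : markov 0 = D ≠ 0
    subst hL
    simp only [markov, if_pos rfl] at hmL
    have hsum2 : ∑ k ∈ Finset.range (Tp + 0),
        ((C ⬝ᵥ (A ^ (Tp + 0 - 1 - k)).mulVec B) * u k
          - (C ⬝ᵥ (A ^ (Tp + 0 - 1 - k)).mulVec B) * u' k) = 0 := by
      refine Finset.sum_eq_zero fun k hk => ?_
      rw [hu k (by simpa using Finset.mem_range.mp hk)]
      ring
    rw [hsum2] at hsum
    have : D * (u Tp - u' Tp) = 0 := by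
      have := hsum
      simp only [Nat.add_zero] at this ⊢
      linarith
    rcases mul_eq_zero.mp this with h1 | h2
    · exact absurd h1 hmL
    · linarith
  · -- L ≥ 1 : D = 0
    have hD0 : D = 0 := hD hL
    rw [hD0] at hsum
    simp only [zero_mul, sub_zero] at hsum
    -- sum collapses to the k = Tp term
    have hsingle : ∑ k ∈ Finset.range (Tp + L),
        ((C ⬝ᵥ (A ^ (Tp + L - 1 - k)).mulVec B) * u k
          - (C ⬝ᵥ (A ^ (Tp + L - 1 - k)).mulVec B) * u' k)
        = (C ⬝ᵥ (A ^ (Tp + L - 1 - Tp)).mulVec B) * u Tp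
          - (C ⬝ᵥ (A ^ (Tp + L - 1 - Tp)).mulVec B) * u' Tp := by
      refine Finset.sum_eq_single Tp (fun k hk hne => ?_) (fun hk => ?_)
      · rcases lt_or_gt_of_ne hne with hlt | hgt
        · rw [hu k hlt]; ring
        · have hkr := Finset.mem_range.mp hk
          have h1 : 1 ≤ Tp + L - 1 - k + 1 := by omega
          have h2 : Tp + L - 1 - k + 1 < L := by omega
          have := hzero (Tp + L - 1 - k + 1) h1 h2
          simp only [Nat.add_sub_cancel] at this
          rw [this]; ring
      · exact absurd (Finset.mem_range.mpr (by omega)) hk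
    have hTpL : Tp + L - 1 - Tp = L - 1 := by omega
    rw [hsingle, hTpL] at hsum
    have hm : C ⬝ᵥ (A ^ (L - 1)).mulVec B ≠ 0 := by
      simpa [markov, Nat.pos_iff_ne_zero.mp hL] using hmL
    have : (C ⬝ᵥ (A ^ (L - 1)).mulVec B) * (u Tp - u' Tp) = 0 := by linarith
    rcases mul_eq_zero.mp this with h1 | h2
    · exact absurd h1 hm
    · linarith
end
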